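/- arXiv:1811.11116 — 2 statements merged into one kernel-verified Lean document; each statement's English description precedes it below -/
import Mathlib

section
/- Let H be a graph on vertex set {1,...,ℓ} and G_1,...,G_ℓ be graphs. Then χ_f(H{G_1,...,G_ℓ}) ≥ χ_f(H) · min_i χ_f(G_i). -/
/-!
Let `x` be a fractional colouring of `H{G_1,…,G_ℓ}` and `m = min_i χ_f(G_i)`; we may assume
`m > 0`. Pulling `x` back to the copy of `G_i` gives a fractional colouring of `G_i` that lives
on the sets meeting that copy, so those sets carry weight at least `m`. Now send every set `J`
to the set of indices whose copies it meets: if `J` is independent, so is its image in `H`,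
because copies indexed by adjacent vertices of `H` are completely joined. The pushed-forward
weights, divided by `m`, form a fractional colouring of `H` of total weight `∑ x / m`.
-/

open Finset

/-- A fractional coloring of `G`. -/
def IsFracColoring {V : Type*} [Fintype V] [DecidableEq V] (G : SimpleGraph V)
    (x : Finset V → ℝ) : Prop :=
  (∀ I, 0 ≤ x I) ∧
  (∀ I : Finset V, x I ≠ 0 → ∀ u ∈ I, ∀ v ∈ I, ¬ G.Adj u v) ∧
  (∀ v : V, 1 ≤ ∑ I ∈ Finset.univ.filter (fun I : Finset V => v ∈ I), x I)

/-- The fractional chromatic number. -/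
noncomputable def fracChromaticNumber {V : Type*} [Fintype V] [DecidableEq V]
    (G : SimpleGraph V) : ℝ :=
  sInf { t : ℝ | ∃ x : Finset V → ℝ, IsFracColoring G x ∧ t = ∑ I : Finset V, x I }

/-- The generalized lexicographic product `H{G_1,…,G_ℓ}`: disjoint copies of the `G i`,
with all edges added between the copies of `G i` and `G j` whenever `ij ∈ E(H)`. -/
def SimpleGraph.comp {ℓ : ℕ} {V : Fin ℓ → Type*} (H : SimpleGraph (Fin ℓ))
    (G : ∀ i, SimpleGraph (V i)) : SimpleGraph (Σ i, V i) where
  Adj x y := H.Adj x.1 y.1 ∨ ∃ h : x.1 = y.1, (G y.1).Adj (h ▸ x.2) y.2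
  symm := by
    refine ⟨?_⟩
    rintro ⟨i, u⟩ ⟨j, v⟩ (h | ⟨h, hadj⟩)
    · exact Or.inl h.symm
    · dsimp at h; subst h
      exact Or.inr ⟨rfl, hadj.symm⟩
  loopless := by
    refine ⟨?_⟩
    rintro ⟨i, u⟩ (h | ⟨h, hadj⟩)
    · exact H.irrefl h
    · have : h = rfl := Subsingleton.elim _ _
      rw [this] at hadj
      exact (G i).irrefl hadj

def fiberSum {α β : Type*} [Fintype α] [DecidableEq β] (φ : α → β) (x : α → ℝ) (b : β) : ℝ :=
  ∑ a with φ a = b, x a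

section FiberSum

variable {α β : Type*} [Fintype α] [DecidableEq β] (φ : α → β) (x : α → ℝ)

lemma fiberSum_nonneg (hx : ∀ a, 0 ≤ x a) (b : β) : 0 ≤ fiberSum φ x b :=
  sum_nonneg fun a _ => hx a

lemma exists_eq_and_ne_zero_of_fiberSum_ne_zero {b : β} (h : fiberSum φ x b ≠ 0) :
    ∃ a, φ a = b ∧ x a ≠ 0 := by
  obtain ⟨a, ha, hxa⟩ := exists_ne_zero_of_sum_ne_zero h
  exact ⟨a, (mem_filter.1 ha).2, hxa⟩

lemma sum_fiberSum [Fintype β] : ∑ b, fiberSum φ x b = ∑ a, x a :=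
  sum_fiberwise univ φ x

lemma sum_filter_fiberSum [Fintype β] (p : β → Prop) [DecidablePred p] :
    ∑ b with p b, fiberSum φ x b = ∑ a with p (φ a), x a := by
  simpa only [fiberSum, mem_filter, mem_univ, true_and] using
    sum_fiberwise_eq_sum_filter univ (univ.filter p) φ x

end FiberSum

section FracColoring

variable {V : Type*} [Fintype V] [DecidableEq V] (G : SimpleGraph V)

lemma isFracColoring_singletons :
    IsFracColoring G fun I => if I.card = 1 then 1 else 0 := by
  have hnonneg (I : Finset V) : 0 ≤ if I.card = 1 then (1 : ℝ) else 0 := by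
    split <;> norm_num
  refine ⟨hnonneg, fun I hI u hu v hv => ?_, fun v => ?_⟩
  · obtain ⟨w, rfl⟩ := card_eq_one.1 (ite_ne_right_iff.1 hI).1
    rw [mem_singleton] at hu hv
    subst hu hv
    exact G.irrefl
  · calc (1 : ℝ) = if ({v} : Finset V).card = 1 then 1 else 0 := by simp
      _ ≤ _ := single_le_sum (fun I _ => hnonneg I) (by simp)

lemma fracChromaticNumber_le_sum {x : Finset V → ℝ} (hx : IsFracColoring G x) :
    fracChromaticNumber G ≤ ∑ I, x I :=
  csInf_le ⟨0, by rintro t ⟨y, hy, rfl⟩; exact sum_nonneg fun I _ => hy.1 I⟩ ⟨x, hx, rfl⟩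

lemma le_fracChromaticNumber {c : ℝ} (h : ∀ x, IsFracColoring G x → c ≤ ∑ I, x I) :
    c ≤ fracChromaticNumber G := by
  refine le_csInf ⟨_, _, isFracColoring_singletons G, rfl⟩ ?_
  rintro t ⟨x, hx, rfl⟩
  exact h x hx

lemma fracChromaticNumber_nonneg : 0 ≤ fracChromaticNumber G :=
  Real.sInf_nonneg <| by rintro t ⟨x, hx, rfl⟩; exact sum_nonneg fun I _ => hx.1 I

lemma fracChromaticNumber_le_sum_nonempty {x : Finset V → ℝ} (hx : IsFracColoring G x) :
    fracChromaticNumber G ≤ ∑ I with I.Nonempty, x I := by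
  rw [sum_filter]
  refine fracChromaticNumber_le_sum G ⟨fun I => ?_, fun I hI => ?_, fun v => ?_⟩
  · dsimp only
    split_ifs <;> simp [hx.1 I]
  · exact hx.2.1 I (ite_ne_right_iff.1 hI).2
  · refine (hx.2.2 v).trans_eq (sum_congr rfl fun I hI => ?_)
    exact (if_pos ⟨v, (mem_filter.1 hI).2⟩).symm

lemma fracChromaticNumber_mul_le_sum {m : ℝ} (hm : 0 < m) {x : Finset V → ℝ}
    (hnonneg : ∀ I, 0 ≤ x I) (hindep : ∀ I, x I ≠ 0 → ∀ u ∈ I, ∀ v ∈ I, ¬ G.Adj u v)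
    (hcover : ∀ v, m ≤ ∑ I with v ∈ I, x I) :
    fracChromaticNumber G * m ≤ ∑ I, x I := by
  have hcol : IsFracColoring G fun I => x I / m := by
    refine ⟨fun I => div_nonneg (hnonneg I) hm.le, fun I hI => hindep I ?_, fun v => ?_⟩
    · exact (div_ne_zero_iff.1 hI).1
    · rw [← sum_div, one_le_div hm]
      exact hcover v
  have := fracChromaticNumber_le_sum G hcol
  rwa [← sum_div, le_div_iff₀ hm] at this

lemma IsFracColoring.comap {W : Type*} [Fintype W] [DecidableEq W] {G' : SimpleGraph W}
    (f : G' →g G) {x : Finset V → ℝ} (hx : IsFracColoring G x) :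
    IsFracColoring G' (fiberSum (fun J => ({w | f w ∈ J} : Finset W)) x) := by
  refine ⟨fiberSum_nonneg _ _ hx.1, fun I hI u hu v hv hadj => ?_, fun w => ?_⟩
  · obtain ⟨J, rfl, hJ⟩ := exists_eq_and_ne_zero_of_fiberSum_ne_zero _ _ hI
    rw [mem_filter] at hu hv
    exact hx.2.1 J hJ _ hu.2 _ hv.2 (f.map_adj hadj)
  · simpa [sum_filter_fiberSum] using hx.2.2 (f w)

lemma fracChromaticNumber_le_of_hom {W : Type*} [Fintype W] [DecidableEq W]
    {G' : SimpleGraph W} (f : G' →g G) {x : Finset V → ℝ} (hx : IsFracColoring G x) :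
    fracChromaticNumber G' ≤ ∑ J with ∃ w, f w ∈ J, x J := by
  refine (fracChromaticNumber_le_sum_nonempty G' (hx.comap G f)).trans_eq ?_
  rw [sum_filter_fiberSum]
  simp [Finset.Nonempty]

end FracColoring

section Comp

variable {ℓ : ℕ} {V : Fin ℓ → Type*} [∀ i, Fintype (V i)] [∀ i, DecidableEq (V i)]
  (H : SimpleGraph (Fin ℓ)) (G : ∀ i, SimpleGraph (V i))

def SimpleGraph.compIncl (i : Fin ℓ) : G i →g H.comp G where
  toFun := Sigma.mk i
  map_rel' h := Or.inr ⟨rfl, h⟩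

lemma fracChromaticNumber_le_sum_image_fst (i : Fin ℓ) {x : Finset (Σ j, V j) → ℝ}
    (hx : IsFracColoring (H.comp G) x) :
    fracChromaticNumber (G i) ≤ ∑ J with i ∈ J.image Sigma.fst, x J := by
  refine (fracChromaticNumber_le_of_hom _ (H.compIncl G i) hx).trans_eq
    (sum_congr (filter_congr fun J _ => ?_) fun _ _ => rfl)
  simp only [mem_image, Sigma.exists, exists_and_right, exists_eq_right]
  rfl

lemma fracChromaticNumber_mul_le_sum_of_isFracColoring_comp {m : ℝ} (hm : 0 < m)
    (hmle : ∀ i, m ≤ fracChromaticNumber (G i)) {x : Finset (Σ j, V j) → ℝ}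
    (hx : IsFracColoring (H.comp G) x) :
    fracChromaticNumber H * m ≤ ∑ J, x J := by
  rw [← sum_fiberSum (fun J => J.image Sigma.fst) x]
  refine fracChromaticNumber_mul_le_sum H hm (fiberSum_nonneg _ _ hx.1)
    (fun S hS i hi j hj hadj => ?_) fun i => ?_
  · obtain ⟨J, rfl, hJ⟩ := exists_eq_and_ne_zero_of_fiberSum_ne_zero _ _ hS
    obtain ⟨⟨i, u⟩, hu, rfl⟩ := mem_image.1 hi
    obtain ⟨⟨j, v⟩, hv, rfl⟩ := mem_image.1 hj
    exact hx.2.1 J hJ _ hu _ hv (Or.inl hadj)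
  · rw [sum_filter_fiberSum]
    exact (hmle i).trans (fracChromaticNumber_le_sum_image_fst H G i hx)

end Comp

theorem fracChromaticNumber_comp_ge_general {ℓ : ℕ} {V : Fin ℓ → Type*}
    [∀ i, Fintype (V i)] [∀ i, DecidableEq (V i)]
    (H : SimpleGraph (Fin ℓ)) (G : ∀ i, SimpleGraph (V i)) :
    fracChromaticNumber H * ⨅ i, fracChromaticNumber (G i) ≤
      fracChromaticNumber (H.comp G) := by
  set m := ⨅ i, fracChromaticNumber (G i)
  rcases le_or_gt m 0 with hm | hm
  · exact (mul_nonpos_of_nonneg_of_nonpos (fracChromaticNumber_nonneg H) hm).trans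
      (fracChromaticNumber_nonneg _)
  have hmle : ∀ i, m ≤ fracChromaticNumber (G i) := ciInf_le (Set.finite_range _).bddBelow
  exact le_fracChromaticNumber _ fun x hx =>
    fracChromaticNumber_mul_le_sum_of_isFracColoring_comp H G hm hmle hx

/-- `χ_f(H{G_1,…,G_ℓ}) ≥ χ_f(H) · min_i χ_f(G_i)`. -/
theorem fracChromaticNumber_comp_ge {ℓ : ℕ} (hℓ : 0 < ℓ) {V : Fin ℓ → Type*}
    [∀ i, Fintype (V i)] [∀ i, DecidableEq (V i)]
    (H : SimpleGraph (Fin ℓ)) (G : ∀ i, SimpleGraph (V i)) :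
    fracChromaticNumber H * ⨅ i, fracChromaticNumber (G i) ≤
      fracChromaticNumber (H.comp G) :=
  fracChromaticNumber_comp_ge_general H G
end

section
/- For all k ≥ 1, n ≥ 7: F_{k+1}(n) ≥ 4 · F_k(F_k(n+1) + 1), where F_k(n) = 2 ↑^k n. -/
/-!
Unfolding twice, `F_{k+1}(n) = F_k(F_k(F_{k+1}(n-2)))` with `F_{k+1}(n-2) ≥ 2^(n-2) ≥ n+3`.
Since `F_k(x+1) ≥ 2 F_k(x)`, shifting an argument of `F_k` by 2 gains a factor 4. At the inner
`F_k` this gives `F_k(F_{k+1}(n-2)) ≥ F_k(n+3) ≥ F_k(n+1) + 3`; at the outer one, the factor 4.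
-/

/-- `towerF k n = 2 ↑^k n`, the Knuth up-arrow tower function with base 2
(for `k ≥ 1`; `towerF 0` is set to `2 ^ n` as well, but is never used). -/
def towerF : ℕ → ℕ → ℕ
  | 0, n => 2 ^ n
  | 1, n => 2 ^ n
  | (k+2), 0 => 1
  | (k+2), (n+1) => towerF (k+1) (towerF (k+2) n)
termination_by k n => (k, n)

/-- `towerFinv k m = 2 ↓^k m`, the largest `b` with `towerF k b ≤ m`. -/
noncomputable def towerFinv (k m : ℕ) : ℕ :=
  sSup { b : ℕ | towerF k b ≤ m }

theorem towerF_add_two_add_one (k n : ℕ) :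
    towerF (k + 2) (n + 1) = towerF (k + 1) (towerF (k + 2) n) := by
  rw [towerF]

theorem two_pow_le_towerF : ∀ k n : ℕ, 2 ^ n ≤ towerF k n
  | 0, _ | 1, _ => by rw [towerF]
  | _ + 2, 0 => by simp [towerF]
  | k + 2, n + 1 => by
      rw [towerF_add_two_add_one]
      calc 2 ^ (n + 1) ≤ 2 ^ 2 ^ n := Nat.pow_le_pow_right two_pos Nat.lt_two_pow_self
        _ ≤ 2 ^ towerF (k + 2) n := Nat.pow_le_pow_right two_pos (two_pow_le_towerF (k + 2) n)
        _ ≤ towerF (k + 1) (towerF (k + 2) n) := two_pow_le_towerF (k + 1) _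
termination_by k n => (k, n)

theorem lt_towerF (k n : ℕ) : n < towerF k n :=
  Nat.lt_two_pow_self.trans_le (two_pow_le_towerF k n)

theorem towerF_strictMono (k : ℕ) : StrictMono (towerF k) := by
  match k with
  | 0 | 1 => exact fun a b h => by simpa only [towerF] using Nat.pow_lt_pow_right one_lt_two h
  | k + 2 =>
    refine strictMono_nat_of_lt_succ fun n => ?_
    rw [towerF_add_two_add_one]
    exact lt_towerF (k + 1) _

theorem two_mul_towerF_le_towerF_succ (k x : ℕ) : 2 * towerF k x ≤ towerF k (x + 1) := by
  match k with
  | 0 | 1 => simp only [towerF, pow_succ']; rfl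
  | k + 2 =>
    rw [towerF_add_two_add_one]
    exact (Nat.mul_le_pow (by decide) _).trans (two_pow_le_towerF (k + 1) _)

theorem four_mul_towerF_le_towerF_add_two (k x : ℕ) : 4 * towerF k x ≤ towerF k (x + 2) :=
  calc 4 * towerF k x = 2 * (2 * towerF k x) := by ring
    _ ≤ 2 * towerF k (x + 1) := Nat.mul_le_mul_left 2 (two_mul_towerF_le_towerF_succ k x)
    _ ≤ towerF k (x + 2) := two_mul_towerF_le_towerF_succ k (x + 1)

/-- For `k ≥ 1` and `n ≥ 7`, `F_{k+1}(n) ≥ 4 · F_k(F_k(n+1) + 1)`. -/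
theorem towerF_succ_ge_four_mul (k : ℕ) (hk : 1 ≤ k) (n : ℕ) (hn : 7 ≤ n) :
    4 * towerF k (towerF k (n + 1) + 1) ≤ towerF (k + 1) n := by
  obtain ⟨j, rfl⟩ : ∃ j, k = j + 1 := ⟨k - 1, by omega⟩
  obtain ⟨m, rfl⟩ : ∃ m, n = m + 2 := ⟨n - 2, by omega⟩
  have hbase : m + 5 ≤ towerF (j + 2) m := by
    have := (Nat.mul_le_pow (by decide : 2 ≠ 1) m).trans (two_pow_le_towerF (j + 2) m)
    omega
  have hinner : towerF (j + 1) (m + 3) + 3 ≤ towerF (j + 2) (m + 1) := by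
    have hpos := lt_towerF (j + 1) (m + 3)
    calc towerF (j + 1) (m + 3) + 3 ≤ 4 * towerF (j + 1) (m + 3) := by omega
      _ ≤ towerF (j + 1) (m + 5) := four_mul_towerF_le_towerF_add_two _ _
      _ ≤ towerF (j + 1) (towerF (j + 2) m) := (towerF_strictMono _).monotone hbase
      _ = towerF (j + 2) (m + 1) := (towerF_add_two_add_one j m).symm
  calc 4 * towerF (j + 1) (towerF (j + 1) (m + 3) + 1)
      ≤ towerF (j + 1) (towerF (j + 1) (m + 3) + 3) := four_mul_towerF_le_towerF_add_two _ _
    _ ≤ towerF (j + 1) (towerF (j + 2) (m + 1)) := (towerF_strictMono _).monotone hinner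
    _ = towerF (j + 2) (m + 2) := (towerF_add_two_add_one j (m + 1)).symm
end
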